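/- arXiv:2403.12330 — 2 statements merged into one kernel-verified Lean document; each statement's English description precedes it below -/
import Mathlib

section
/- Let H = Σ_X Σ_μ J_X^μ ⊗_{j∈X} σ_j^{μ_j} be a Hamiltonian on a spin chain of even length N with J_X^μ = 0 whenever D(X) ≥ N/4, and let |EAP⟩ be an entangled antipodal pair state with signs ω_j^μ. If |EAP⟩ is an eigenvector of H, then its eigenvalue is 0. -/
open Matrix Finset
open scoped Kronecker

noncomputable section

/-- Pauli X. -/
def σx : Matrix (Fin 2) (Fin 2) ℂ := !![0, 1; 1, 0]
/-- Pauli Y. -/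
def σy : Matrix (Fin 2) (Fin 2) ℂ := !![0, -Complex.I; Complex.I, 0]
/-- Pauli Z. -/
def σz : Matrix (Fin 2) (Fin 2) ℂ := !![1, 0; 0, -1]

/-- Pauli matrices indexed by `0 = x`, `1 = y`, `2 = z`. -/
def pauli : Fin 3 → Matrix (Fin 2) (Fin 2) ℂ := ![σx, σy, σz]

/-- The Bell state `|Φ_{pq}⟩ = (|0⟩|p⟩ + (-1)^q |1⟩|p̄⟩)/√2` on two qubits. -/
def bell (p q : Fin 2) : Fin 2 × Fin 2 → ℂ := fun ab =>
  ((if ab = (0, p) then 1 else 0) +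
    (if ab = (1, p + 1) then ((-1 : ℂ)) ^ (q : ℕ) else 0)) / (Real.sqrt 2 : ℂ)

/-- Signs `ω^x = (-1)^q`, `ω^y = -ω^x ω^z`, `ω^z = (-1)^p`, indexed by `0 = x`, `1 = y`, `2 = z`. -/
def omegaSign (p q : Fin 2) : Fin 3 → ℂ :=
  ![((-1 : ℂ)) ^ (q : ℕ), -(((-1 : ℂ)) ^ (q : ℕ) * ((-1 : ℂ)) ^ (p : ℕ)),
    ((-1 : ℂ)) ^ (p : ℕ)]

/-- Spin configurations of the cyclic chain `Λ = ℤ/N`. -/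
abbrev Cfg (N : ℕ) := ZMod N → Fin 2

/-- The single-site operator `σ_j^A` (acting as `A` on site `j` and identity elsewhere). -/
def pauliAt (N : ℕ) [NeZero N] (j : ZMod N) (A : Matrix (Fin 2) (Fin 2) ℂ) :
    Matrix (Cfg N) (Cfg N) ℂ :=
  Matrix.of fun c c' => if ∀ i, i ≠ j → c i = c' i then A (c j) (c' j) else 0

/-- The Pauli string `⊗_{j∈X} σ_j^{μ_j}`. -/
def pauliString (N : ℕ) [NeZero N] (X : Finset (ZMod N)) (μ : ZMod N → Fin 3) :
    Matrix (Cfg N) (Cfg N) ℂ :=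
  Matrix.of fun c c' =>
    (∏ j ∈ X, pauli (μ j) (c j) (c' j)) * (if ∀ i, i ∉ X → c i = c' i then 1 else 0)

/-- The entangled antipodal pair state `⊗_{j=0}^{M-1} |Φ_{p_j q_j}⟩_{j, j+M}` on a chain
of length `N = 2M`, as an amplitude function on configurations. -/
def eapState (N M : ℕ) [NeZero N] (p q : ZMod N → Fin 2) : Cfg N → ℂ :=
  fun c => ∏ j ∈ Finset.range M,
    bell (p (j : ZMod N)) (q (j : ZMod N)) (c (j : ZMod N), c ((j : ZMod N) + (M : ZMod N)))

/-- Diameter of a subset of the cycle `ℤ/N` (maximal cyclic distance between two points). -/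
def diam (N : ℕ) [NeZero N] (X : Finset (ZMod N)) : ℕ :=
  X.sup fun a => X.sup fun b => min (a - b).val (b - a).val

/-- A Hamiltonian expanded in the Pauli string basis,
`H = Σ_X Σ_μ J_X^μ ⊗_{j∈X} σ_j^{μ_j}`, with real coefficients `J`. -/
def ham (N : ℕ) [NeZero N] (J : Finset (ZMod N) → (ZMod N → Fin 3) → ℝ) :
    Matrix (Cfg N) (Cfg N) ℂ :=
  ∑ X : Finset (ZMod N), ∑ μ : ZMod N → Fin 3, (J X μ : ℂ) • pauliString N X μ


/-! The expectation `⟨EAP|H|EAP⟩` equals `λ` because the state is normalised. It also vanishes: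
the state is a tensor product of Bell pairs on the antipodal pairs `{j, j + N/2}`, so the
expectation of a Pauli string factorises over the pairs, and the one-site reduced state of a Bell
pair is maximally mixed, so a pair on which the string acts at exactly one site contributes
`tr σ^μ / 2 = 0`. A nonempty string of diameter `< N/4` contains no antipodal pair, hence acts on
exactly one site of some pair. -/

theorem Pi.star_comp {α β R : Type*} [Star R] (v : α → R) (f : β → α) :
    star (v ∘ f) = star v ∘ f :=
  rfl

section ProductState

variable {ι α R : Type*} [Fintype ι] [CommSemiring R]

def piVec (φ : ι → α → R) : (ι → α) → R := fun g => ∏ j, φ j (g j)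

def piMat (A : ι → Matrix α α R) : Matrix (ι → α) (ι → α) R :=
  of fun g g' => ∏ j, A j (g j) (g' j)

theorem star_piVec [StarRing R] (φ : ι → α → R) :
    star (piVec φ) = piVec fun j => star (φ j) := by
  ext g
  simp only [Pi.star_apply, piVec, star_prod]

variable [DecidableEq ι] [Fintype α]

theorem piVec_dotProduct_piVec (φ ψ : ι → α → R) :
    piVec φ ⬝ᵥ piVec ψ = ∏ j, φ j ⬝ᵥ ψ j := by
  simp only [dotProduct, piVec, Fintype.prod_sum, ← Finset.prod_mul_distrib]

theorem piMat_mulVec_piVec (A : ι → Matrix α α R) (φ : ι → α → R) :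
    piMat A *ᵥ piVec φ = piVec fun j => A j *ᵥ φ j := by
  ext g
  simp only [mulVec, dotProduct, piMat, piVec, of_apply, Fintype.prod_sum,
    ← Finset.prod_mul_distrib]

end ProductState

theorem ofReal_sqrt_two_sq : (Real.sqrt 2 : ℂ) ^ 2 = 2 := by
  rw [← Complex.ofReal_pow, Real.sq_sqrt zero_le_two, Complex.ofReal_ofNat]

theorem bell_expect_kronecker_one (p q : Fin 2) (A : Matrix (Fin 2) (Fin 2) ℂ) :
    star (bell p q) ⬝ᵥ (A ⊗ₖ 1) *ᵥ bell p q = trace A / 2 := by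
  fin_cases p <;> fin_cases q <;>
    simp [bell, dotProduct, mulVec, Fintype.sum_prod_type, Fin.sum_univ_two, trace_fin_two,
      one_apply, Prod.ext_iff, Complex.conj_ofReal] <;>
    field_simp <;> rw [ofReal_sqrt_two_sq] <;> ring

theorem bell_expect_one_kronecker (p q : Fin 2) (A : Matrix (Fin 2) (Fin 2) ℂ) :
    star (bell p q) ⬝ᵥ (1 ⊗ₖ A) *ᵥ bell p q = trace A / 2 := by
  fin_cases p <;> fin_cases q <;>
    simp [bell, dotProduct, mulVec, Fintype.sum_prod_type, Fin.sum_univ_two, trace_fin_two,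
      one_apply, Prod.ext_iff, Complex.conj_ofReal] <;>
    field_simp <;> rw [ofReal_sqrt_two_sq] <;> ring

theorem star_bell_dotProduct_bell (p q : Fin 2) : star (bell p q) ⬝ᵥ bell p q = 1 := by
  simpa using bell_expect_kronecker_one p q 1

theorem trace_pauli (μ : Fin 3) : trace (pauli μ) = 0 := by
  fin_cases μ <;> simp [pauli, σx, σy, σz, trace_fin_two]

section AntipodalPairs

variable {N M : ℕ}

theorem half_add_half_eq_zero (hN : N = 2 * M) : (M : ZMod N) + M = 0 := by
  rw [← two_mul, ← Nat.cast_ofNat, ← Nat.cast_mul, ← hN, ZMod.natCast_self]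

variable [NeZero N]

theorem le_diam_of_mem_of_add_mem (hN : N = 2 * M) {X : Finset (ZMod N)} {a : ZMod N}
    (ha : a ∈ X) (ha' : a + M ∈ X) : M ≤ diam N X := by
  have hval : (M : ZMod N).val = M := ZMod.val_natCast_of_lt (by have := NeZero.ne N; omega)
  have hsub : a - (a + M) = (M : ZMod N) := by
    linear_combination -half_add_half_eq_zero hN
  calc M = min (a - (a + M)).val (a + M - a).val := by simp [hsub, hval]
    _ ≤ X.sup fun b => min (a - b).val (b - a).val :=
      Finset.le_sup (f := fun b => min (a - b).val (b - a).val) ha'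
    _ ≤ diam N X := Finset.le_sup (f := fun a => X.sup fun b => min (a - b).val (b - a).val) ha

theorem pairSite_bijective (hN : N = 2 * M) :
    Function.Bijective fun x : Fin M × Fin 2 => ((x.1 + x.2 * M : ℕ) : ZMod N) := by
  have hlt (x : Fin M × Fin 2) : (x.1 + x.2 * M : ℕ) < N := by
    obtain ⟨⟨j, hj⟩, k⟩ := x
    fin_cases k <;> simp only [zero_mul, one_mul, add_zero] <;> omega
  refine (Fintype.bijective_iff_injective_and_card _).2 ⟨?_, by simp [hN, mul_comm]⟩
  rintro ⟨⟨j, hj⟩, k⟩ ⟨⟨j', hj'⟩, k'⟩ h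
  replace h := congrArg ZMod.val h
  rw [ZMod.val_natCast_of_lt (hlt _), ZMod.val_natCast_of_lt (hlt _)] at h
  fin_cases k <;> fin_cases k' <;>
    simp only [zero_mul, one_mul, add_zero, Prod.mk.injEq,
      Fin.ext_iff, and_true] at h ⊢ <;> omega

def pairSite (hN : N = 2 * M) : Fin M × Fin 2 ≃ ZMod N :=
  Equiv.ofBijective _ (pairSite_bijective hN)

@[simp]
theorem pairSite_zero (hN : N = 2 * M) (j : Fin M) : pairSite hN (j, 0) = (j : ℕ) := by
  simp [pairSite]

@[simp]
theorem pairSite_one (hN : N = 2 * M) (j : Fin M) :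
    pairSite hN (j, 1) = ((j : ℕ) : ZMod N) + M := by
  simp [pairSite]

def pairCfg (hN : N = 2 * M) : Cfg N ≃ (Fin M → Fin 2 × Fin 2) :=
  ((pairSite hN).arrowCongr (Equiv.refl (Fin 2))).symm.trans
    ((Equiv.curry _ _ _).trans (Equiv.piCongrRight fun _ => finTwoArrowEquiv _))

@[simp]
theorem pairCfg_apply (hN : N = 2 * M) (c : Cfg N) (j : Fin M) :
    pairCfg hN c j = (c (j : ℕ), c (((j : ℕ) : ZMod N) + M)) := by
  simp [pairCfg, finTwoArrowEquiv]

theorem eapState_eq_piVec (hN : N = 2 * M) (p q : ZMod N → Fin 2) :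
    eapState N M p q = piVec (fun j : Fin M => bell (p (j : ℕ)) (q (j : ℕ))) ∘ pairCfg hN := by
  ext c
  simp [eapState, piVec, Fin.prod_univ_eq_prod_range
    (fun j => bell (p j) (q j) (c j, c ((j : ZMod N) + M)))]

theorem piMat_eq_submatrix (hN : N = 2 * M) (m : ZMod N → Matrix (Fin 2) (Fin 2) ℂ) :
    piMat m = (piMat fun j : Fin M => m (j : ℕ) ⊗ₖ m (((j : ℕ) : ZMod N) + M)).submatrix
      (pairCfg hN) (pairCfg hN) := by
  ext c c'
  simp [piMat, ← (pairSite hN).prod_comp, Fintype.prod_prod_type, Fin.prod_univ_two]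

theorem star_eapState_dotProduct_eapState (hN : N = 2 * M) (p q : ZMod N → Fin 2) :
    star (eapState N M p q) ⬝ᵥ eapState N M p q = 1 := by
  rw [eapState_eq_piVec hN, Pi.star_comp, comp_equiv_dotProduct_comp_equiv, star_piVec,
    piVec_dotProduct_piVec]
  exact Finset.prod_eq_one fun j _ => star_bell_dotProduct_bell _ _

theorem eap_expect_piMat (hN : N = 2 * M) (p q : ZMod N → Fin 2)
    (m : ZMod N → Matrix (Fin 2) (Fin 2) ℂ) :
    star (eapState N M p q) ⬝ᵥ piMat m *ᵥ eapState N M p q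
      = ∏ j : Fin M, star (bell (p (j : ℕ)) (q (j : ℕ))) ⬝ᵥ
          (m (j : ℕ) ⊗ₖ m (((j : ℕ) : ZMod N) + M)) *ᵥ bell (p (j : ℕ)) (q (j : ℕ)) := by
  rw [piMat_eq_submatrix hN, eapState_eq_piVec hN, submatrix_mulVec_equiv, Function.comp_assoc,
    Equiv.self_comp_symm, Function.comp_id, Pi.star_comp, comp_equiv_dotProduct_comp_equiv,
    star_piVec, piMat_mulVec_piVec, piVec_dotProduct_piVec]

end AntipodalPairs

def siteOp {N : ℕ} (X : Finset (ZMod N)) (μ : ZMod N → Fin 3) (i : ZMod N) :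
    Matrix (Fin 2) (Fin 2) ℂ :=
  if i ∈ X then pauli (μ i) else 1

theorem pauliString_eq_piMat (N : ℕ) [NeZero N] (X : Finset (ZMod N)) (μ : ZMod N → Fin 3) :
    pauliString N X μ = piMat (siteOp X μ) := by
  ext c c'
  rw [pauliString, piMat, of_apply, of_apply, ← Finset.prod_mul_prod_compl X]
  congr 1
  · exact Finset.prod_congr rfl fun i hi => by simp [siteOp, hi]
  · rw [Finset.prod_congr rfl fun i hi => by rw [siteOp, if_neg (Finset.mem_compl.1 hi)]]
    simp [one_apply, Finset.prod_boole]

theorem eap_expect_pauliString (N M : ℕ) [NeZero N] (hN : N = 2 * M) (p q : ZMod N → Fin 2)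
    {X : Finset (ZMod N)} (hX : X.Nonempty) (hdiam : diam N X < M) (μ : ZMod N → Fin 3) :
    star (eapState N M p q) ⬝ᵥ pauliString N X μ *ᵥ eapState N M p q = 0 := by
  rw [pauliString_eq_piMat, eap_expect_piMat hN]
  obtain ⟨a, ha⟩ := hX
  obtain ⟨⟨j, k⟩, rfl⟩ := (pairSite hN).surjective a
  have hpair : ¬ (((j : ℕ) : ZMod N) ∈ X ∧ ((j : ℕ) : ZMod N) + M ∈ X) := fun h =>
    hdiam.not_ge (le_diam_of_mem_of_add_mem hN h.1 h.2)
  refine Finset.prod_eq_zero (Finset.mem_univ j) ?_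
  fin_cases k
  · simp only [Fin.zero_eta, pairSite_zero] at ha
    rw [siteOp, siteOp, if_pos ha, if_neg fun h => hpair ⟨ha, h⟩, bell_expect_kronecker_one,
      trace_pauli, zero_div]
  · simp only [Fin.mk_one, pairSite_one] at ha
    rw [siteOp, siteOp, if_neg fun h => hpair ⟨h, ha⟩, if_pos ha, bell_expect_one_kronecker,
      trace_pauli, zero_div]

theorem eap_eigenvalue_zero_general (N M : ℕ) [NeZero N] (hN : N = 2 * M)
    (p q : ZMod N → Fin 2)
    (J : Finset (ZMod N) → (ZMod N → Fin 3) → ℝ)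
    (hloc : ∀ X μ, N ≤ 4 * diam N X → J X μ = 0)
    (htr : ∀ μ, J ∅ μ = 0)
    (lam : ℂ)
    (heig : (ham N J).mulVec (eapState N M p q) = lam • eapState N M p q) :
    lam = 0 := by
  have hexpect : star (eapState N M p q) ⬝ᵥ ham N J *ᵥ eapState N M p q = lam := by
    rw [heig, dotProduct_smul, star_eapState_dotProduct_eapState hN, smul_eq_mul, mul_one]
  rw [← hexpect]
  simp only [ham, sum_mulVec, smul_mulVec, dotProduct_sum, dotProduct_smul]
  refine Finset.sum_eq_zero fun X _ => Finset.sum_eq_zero fun μ _ => ?_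
  by_cases hJ : J X μ = 0
  · simp [hJ]
  have hX : X.Nonempty := Finset.nonempty_iff_ne_empty.2 fun h => hJ (h ▸ htr μ)
  have hdiam : diam N X < M := by
    by_contra h
    exact hJ (hloc X μ (by omega))
  rw [eap_expect_pauliString N M hN p q hX hdiam, smul_zero]

/-- If an EAP state is an eigenvector of the (traceless, `D(X) < N/4`-local)
Hamiltonian `H`, then its eigenvalue is `0`. -/
theorem eap_eigenvalue_zero (N M : ℕ) [NeZero N] (hN : N = 2 * M)
    (p q : ZMod N → Fin 2)
    (hp : ∀ j : ZMod N, p (j + (M : ZMod N)) = p j)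
    (hq : ∀ j : ZMod N, q (j + (M : ZMod N)) = q j)
    (J : Finset (ZMod N) → (ZMod N → Fin 3) → ℝ)
    (hloc : ∀ X μ, N ≤ 4 * diam N X → J X μ = 0)
    (htr : ∀ μ, J ∅ μ = 0)
    (lam : ℂ)
    (heig : (ham N J).mulVec (eapState N M p q) = lam • eapState N M p q) :
    lam = 0 :=
  eap_eigenvalue_zero_general N M hN p q J hloc htr lam heig
end
end

section
/- Let N be even with N/2 a multiple of 4, and let |4;10,11,00,01⟩ be the EAP state whose Bell-pair labels (p_j,q_j) repeat the pattern (1,0),(1,1),(0,0),(0,1) with period 4. Then for arbitrary real J^{xx}, J^{yz}, the Hamiltonian H₃ = Σ_{j=1}^{N} (J^{xx} σ_j^x σ_{j+1}^x + J^{yz} σ_j^y σ_{j+1}^z) satisfies H₃ |4;10,11,00,01⟩ = 0. -/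
open Matrix Finset
open scoped Kronecker

noncomputable section

/-- EAP state whose Bell-pair labels are given by patterns `pl, ql : ℕ → Fin 2`
(indexed by the representative `j ∈ {0,…,M-1}` of each antipodal pair). -/
def eapPat (N M : ℕ) [NeZero N] (pl ql : ℕ → Fin 2) : Cfg N → ℂ :=
  fun c => ∏ j ∈ Finset.range M,
    bell (pl j) (ql j) (c (j : ZMod N), c ((j : ZMod N) + (M : ZMod N)))

/-!
A Bell pair `|Φ_{pq}⟩` is an eigenvector of `σ^μ ⊗ σ^μ` with eigenvalue `ω^μ = ±1`, so on the
EAP state a Pauli matrix at site `j` can be moved to the antipodal site `j + M` at the cost of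
the sign `ω^μ_j`. Moving both factors of a bond term `σ_j^μ σ_{j+1}^ν` gives the sign
`ω^μ_j ω^ν_{j+1}`, which for the period-4 labels equals `-1` for both `(μ, ν) = (x, x)` and
`(y, z)`. Hence the local terms satisfy `h_j ψ = -h_{j+M} ψ`; summing over the cycle and shifting
the index by `M` gives `H₃ ψ = -H₃ ψ`.
-/

theorem Function.Antiperiodic.sum_eq_zero {α β : Type*} [AddGroup α] [Fintype α]
    [AddCommGroup β] [IsAddTorsionFree β] {f : α → β} {c : α} (hf : Function.Antiperiodic f c) :
    ∑ x, f x = 0 :=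
  self_eq_neg.mp <| calc
    ∑ x, f x = ∑ x, f (x + c) := (Equiv.sum_comp (Equiv.addRight c) f).symm
    _ = -∑ x, f x := by rw [← Finset.sum_neg_distrib]; exact Fintype.sum_congr _ _ hf

lemma sum_pauli_mul_bell_fst (p q a d : Fin 2) (μ : Fin 3) :
    ∑ b : Fin 2, pauli μ a b * bell p q (b, d) =
      omegaSign p q μ * ∑ b : Fin 2, pauli μ d b * bell p q (a, b) := by
  fin_cases p <;> fin_cases q <;> fin_cases μ <;> fin_cases a <;> fin_cases d <;>
    simp [pauli, bell, omegaSign, σx, σy, σz, Fin.sum_univ_two, Prod.ext_iff,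
      Fin.ext_iff, - Fin.val_eq_zero_iff] <;> ring

lemma omegaSign_mul_self (p q : Fin 2) (μ : Fin 3) : omegaSign p q μ * omegaSign p q μ = 1 := by
  fin_cases p <;> fin_cases q <;> fin_cases μ <;> norm_num [omegaSign]

lemma natCast_eq_natCast_iff_of_lt {N a b : ℕ} (ha : a < N) (hb : b < N) :
    (a : ZMod N) = b ↔ a = b := by
  rw [ZMod.natCast_eq_natCast_iff', Nat.mod_eq_of_lt ha, Nat.mod_eq_of_lt hb]

section Chain

variable {N M : ℕ} (pl ql : ℕ → Fin 2)

lemma prod_erase_bell_update (hN : N = 2 * M) {k : ℕ} (hk : k < M) {x : ZMod N}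
    (hx : x = k ∨ x = k + M) (c : Cfg N) (b : Fin 2) :
    ∏ i ∈ (Finset.range M).erase k, bell (pl i) (ql i)
        (Function.update c x b i, Function.update c x b (i + M)) =
      ∏ i ∈ (Finset.range M).erase k, bell (pl i) (ql i) (c i, c (i + M)) := by
  have hx' : ∀ n < N, n ≠ k → n ≠ k + M → (n : ZMod N) ≠ x := by
    intro n hn hnk hnkM
    rcases hx with rfl | rfl
    · rwa [Ne, natCast_eq_natCast_iff_of_lt hn (by omega)]
    · rwa [← Nat.cast_add, Ne, natCast_eq_natCast_iff_of_lt hn (by omega)]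
  refine Finset.prod_congr rfl fun i hi => ?_
  obtain ⟨hik, hiM⟩ : i ≠ k ∧ i < M := by simpa using hi
  have hiM' := hx' (i + M) (by omega) (by omega) (by omega)
  push_cast at hiM'
  rw [Function.update_of_ne (hx' i (by omega) hik (by omega)), Function.update_of_ne hiM']

variable [NeZero N]

lemma pauliAt_mulVec_apply (j : ZMod N) (A : Matrix (Fin 2) (Fin 2) ℂ) (v : Cfg N → ℂ)
    (c : Cfg N) :
    (pauliAt N j A *ᵥ v) c = ∑ b : Fin 2, A (c j) b * v (Function.update c j b) := by
  simp only [mulVec, dotProduct, pauliAt, of_apply, ite_mul, zero_mul, ← Finset.sum_filter]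
  have hupd : ∀ c' : Cfg N, (∀ i, i ≠ j → c i = c' i) → Function.update c j (c' j) = c' :=
    fun c' hc' => Function.update_eq_iff.mpr ⟨rfl, hc'⟩
  exact Finset.sum_bij' (fun c' _ => c' j) (fun b _ => Function.update c j b) (by simp)
    (by simp +contextual [Function.update_of_ne]) (fun c' hc' => hupd c' (by simpa using hc'))
    (by simp) (fun c' hc' => by rw [hupd c' (by simpa using hc')])

lemma pauliAt_mulVec_comm {i j : ZMod N} (h : i ≠ j) (A B : Matrix (Fin 2) (Fin 2) ℂ)
    (v : Cfg N → ℂ) :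
    pauliAt N i A *ᵥ (pauliAt N j B *ᵥ v) = pauliAt N j B *ᵥ (pauliAt N i A *ᵥ v) := by
  funext c
  simp only [pauliAt_mulVec_apply, Finset.mul_sum, Function.update_of_ne h,
    Function.update_of_ne h.symm]
  rw [Finset.sum_comm]
  refine Finset.sum_congr rfl fun a _ => Finset.sum_congr rfl fun b _ => ?_
  rw [Function.update_comm h]
  ring

lemma eapPat_eq_bell_mul_prod_erase {k : ℕ} (hk : k < M) (c : Cfg N) :
    eapPat N M pl ql c = bell (pl k) (ql k) (c k, c (k + M)) *
      ∏ i ∈ (Finset.range M).erase k, bell (pl i) (ql i) (c i, c (i + M)) :=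
  (Finset.mul_prod_erase _ _ (Finset.mem_range.mpr hk)).symm

lemma pauliAt_natCast_mulVec_eapPat (hN : N = 2 * M) {k : ℕ} (hk : k < M) (μ : Fin 3) :
    pauliAt N k (pauli μ) *ᵥ eapPat N M pl ql =
      omegaSign (pl k) (ql k) μ • (pauliAt N (k + M) (pauli μ) *ᵥ eapPat N M pl ql) := by
  have hne : ((k : ZMod N) + M) ≠ k := by
    rw [← Nat.cast_add, Ne, natCast_eq_natCast_iff_of_lt (by omega) (by omega)]
    omega
  funext c
  simp only [Pi.smul_apply, smul_eq_mul, pauliAt_mulVec_apply,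
    eapPat_eq_bell_mul_prod_erase pl ql hk,
    prod_erase_bell_update pl ql hN hk (.inl rfl), prod_erase_bell_update pl ql hN hk (.inr rfl),
    Function.update_self, Function.update_of_ne hne, Function.update_of_ne hne.symm,
    ← mul_assoc, ← Finset.sum_mul, sum_pauli_mul_bell_fst]

lemma pauliAt_mulVec_eapPat (hN : N = 2 * M) (j : ZMod N) (μ : Fin 3) :
    pauliAt N j (pauli μ) *ᵥ eapPat N M pl ql =
      omegaSign (pl (j.val % M)) (ql (j.val % M)) μ •
        (pauliAt N (j + M) (pauli μ) *ᵥ eapPat N M pl ql) := by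
  have hjN : j.val < N := ZMod.val_lt j
  have hk : j.val % M < M := Nat.mod_lt _ (by have := NeZero.ne N; omega)
  rcases lt_or_ge j.val M with hj | hj
  · have hjk : j = ((j.val % M : ℕ) : ZMod N) := by
      rw [Nat.mod_eq_of_lt hj, ZMod.natCast_zmod_val]
    generalize j.val % M = k at hk hjk ⊢
    subst hjk
    exact pauliAt_natCast_mulVec_eapPat pl ql hN hk μ
  · have hval : j.val % M + M = j.val := by
      rw [Nat.mod_eq_sub_mod hj, Nat.mod_eq_of_lt (by omega)]
      omega
    have hjk : j = ((j.val % M : ℕ) : ZMod N) + M := by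
      rw [← Nat.cast_add, hval, ZMod.natCast_zmod_val]
    have hjM : j + M = ((j.val % M : ℕ) : ZMod N) := by
      conv_lhs => rw [hjk]
      rw [add_assoc, ← Nat.cast_add, show M + M = N by omega, ZMod.natCast_self, add_zero]
    generalize j.val % M = k at hk hjk hjM ⊢
    rw [hjM, pauliAt_natCast_mulVec_eapPat pl ql hN hk μ, smul_smul, omegaSign_mul_self,
      one_smul, ← hjk]

lemma pauliAt_mul_pauliAt_succ_mulVec_eapPat (hN : N = 2 * M) (hM : 2 ≤ M) (j : ZMod N)
    (μ ν : Fin 3) :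
    (pauliAt N j (pauli μ) * pauliAt N (j + 1) (pauli ν)) *ᵥ eapPat N M pl ql =
      (omegaSign (pl (j.val % M)) (ql (j.val % M)) μ *
        omegaSign (pl ((j + 1).val % M)) (ql ((j + 1).val % M)) ν) •
      ((pauliAt N (j + M) (pauli μ) * pauliAt N (j + M + 1) (pauli ν)) *ᵥ eapPat N M pl ql) := by
  have hM1 : (1 : ZMod N) + M ≠ 0 := by
    rw [← Nat.cast_one, ← Nat.cast_add, ← Nat.cast_zero, Ne,
      natCast_eq_natCast_iff_of_lt (by omega) (by omega)]
    omega
  have h1 : (1 : ZMod N) ≠ 0 := by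
    rw [← Nat.cast_one, ← Nat.cast_zero, Ne, natCast_eq_natCast_iff_of_lt (by omega) (by omega)]
    omega
  have hA : j ≠ j + 1 + M := by rw [add_assoc]; exact fun h => hM1 (left_eq_add.mp h)
  have hB : j + 1 + M ≠ j + M := by rw [add_right_comm]; exact fun h => h1 (left_eq_add.mp h.symm)
  rw [← mulVec_mulVec, ← mulVec_mulVec, pauliAt_mulVec_eapPat pl ql hN (j + 1) ν, mulVec_smul,
    pauliAt_mulVec_comm hA, pauliAt_mulVec_eapPat pl ql hN j μ, mulVec_smul,
    pauliAt_mulVec_comm hB, smul_smul, mul_comm, add_right_comm]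

end Chain

/-- Bell labels `(p_j, q_j)` of `|4;10,11,00,01⟩`. -/
def model3P (j : ℕ) : Fin 2 := if j % 4 ≤ 1 then 1 else 0

def model3Q (j : ℕ) : Fin 2 := if j % 4 = 0 ∨ j % 4 = 2 then 0 else 1

lemma omegaSign_model3_xx {a b : ℕ} (hab : b % 4 = (a + 1) % 4) :
    omegaSign (model3P a) (model3Q a) 0 * omegaSign (model3P b) (model3Q b) 0 = -1 := by
  simp only [model3P, model3Q, hab]
  rcases (by omega : a % 4 = 0 ∨ a % 4 = 1 ∨ a % 4 = 2 ∨ a % 4 = 3) with h | h | h | h <;>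
    simp [h, Nat.add_mod a 1 4, omegaSign]

lemma omegaSign_model3_yz {a b : ℕ} (hab : b % 4 = (a + 1) % 4) :
    omegaSign (model3P a) (model3Q a) 1 * omegaSign (model3P b) (model3Q b) 2 = -1 := by
  simp only [model3P, model3Q, hab]
  rcases (by omega : a % 4 = 0 ∨ a % 4 = 1 ∨ a % 4 = 2 ∨ a % 4 = 3) with h | h | h | h <;>
    simp [h, Nat.add_mod a 1 4, omegaSign]

lemma val_add_one_mod_mod_four {N M : ℕ} [NeZero N] (hN : N = 2 * M) (hM : 4 ∣ M) (j : ZMod N) :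
    (j + 1).val % M % 4 = (j.val % M + 1) % 4 := by
  have h4N : 4 ∣ N := hN ▸ Dvd.dvd.mul_left hM 2
  have : Fact (1 < N) := ⟨by have := NeZero.ne N; obtain ⟨t, rfl⟩ := hM; omega⟩
  rw [Nat.mod_mod_of_dvd _ hM, ZMod.val_add, ZMod.val_one, Nat.mod_mod_of_dvd _ h4N,
    Nat.add_mod (j.val % M), Nat.mod_mod_of_dvd _ hM, ← Nat.add_mod]

def model3Term (N : ℕ) [NeZero N] (Jxx Jyz : ℝ) (j : ZMod N) : Matrix (Cfg N) (Cfg N) ℂ :=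
  (Jxx : ℂ) • (pauliAt N j σx * pauliAt N (j + 1) σx) +
    (Jyz : ℂ) • (pauliAt N j σy * pauliAt N (j + 1) σz)

lemma antiperiodic_model3Term_mulVec_eapPat {N M : ℕ} [NeZero N] (hN : N = 2 * M) (hM : 4 ∣ M)
    (Jxx Jyz : ℝ) :
    Function.Antiperiodic (fun j => model3Term N Jxx Jyz j *ᵥ eapPat N M model3P model3Q)
      (M : ZMod N) := by
  intro j
  have hM2 : 2 ≤ M := by have := NeZero.ne N; obtain ⟨t, rfl⟩ := hM; omega
  have hxx := omegaSign_model3_xx (val_add_one_mod_mod_four hN hM j)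
  have hyz := omegaSign_model3_yz (val_add_one_mod_mod_four hN hM j)
  simp only [model3Term, add_mulVec, smul_mulVec, show σx = pauli 0 from rfl,
    show σy = pauli 1 from rfl, show σz = pauli 2 from rfl]
  rw [pauliAt_mul_pauliAt_succ_mulVec_eapPat _ _ hN hM2 j 0 0,
    pauliAt_mul_pauliAt_succ_mulVec_eapPat _ _ hN hM2 j 1 2, hxx, hyz]
  simp only [neg_smul, one_smul, smul_neg, neg_add, neg_neg]

/-- Model 3: when `N/2` is a multiple of 4, the EAP state `|4;10,11,00,01⟩` (Bell labels
repeating `(1,0),(1,1),(0,0),(0,1)` with period 4) is a zero-energy eigenstate of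
`H₃ = Σ_j (J^{xx} σ_j^x σ_{j+1}^x + J^{yz} σ_j^y σ_{j+1}^z)`. -/
theorem model3_eap_eigenstate (N M : ℕ) [NeZero N] (hN : N = 2 * M) (hM : 4 ∣ M)
    (Jxx Jyz : ℝ) :
    (∑ j : ZMod N,
        ((Jxx : ℂ) • (pauliAt N j σx * pauliAt N (j + 1) σx) +
          (Jyz : ℂ) • (pauliAt N j σy * pauliAt N (j + 1) σz))).mulVec
      (eapPat N M (fun j => if j % 4 ≤ 1 then 1 else 0)
        (fun j => if j % 4 = 0 ∨ j % 4 = 2 then 0 else 1)) = 0 := by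
  change (∑ j, model3Term N Jxx Jyz j) *ᵥ eapPat N M model3P model3Q = 0
  rw [sum_mulVec]
  exact (antiperiodic_model3Term_mulVec_eapPat hN hM Jxx Jyz).sum_eq_zero
end
end
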